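/- The expected ρ-derivative of the noisy-data least squares objective at the true parameter equals the explicit bias term: E[∂L*_LS/∂ρ (γ0)] = 2λ² [ tr{(S0ᵀS0)² d0 ḋ0} − tr(S0ᵀS0 d0² 𝕎0) ] + 2λx² (β02ᵀ β02) [ tr(S0ᵀS0 d0 ḋ0) − tr(S0 d0² Wᵀ) ]. -/

import Mathlib

open MeasureTheory ProbabilityTheory Matrix
open scoped Matrix

namespace PSAR

/-- `S(ρ) = I_N − ρ W`. -/
noncomputable def Smat {N : ℕ} (W : Matrix (Fin N) (Fin N) ℝ) (ρ : ℝ) :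
    Matrix (Fin N) (Fin N) ℝ :=
  1 - ρ • W

/-- `Ω(ρ, σ²) = σ² I_N + λ² S(ρ) S(ρ)ᵀ`. -/
noncomputable def Omat {N : ℕ} (W : Matrix (Fin N) (Fin N) ℝ) (lam2 ρ σ2 : ℝ) :
    Matrix (Fin N) (Fin N) ℝ :=
  σ2 • (1 : Matrix (Fin N) (Fin N) ℝ) + lam2 • (Smat W ρ * (Smat W ρ)ᵀ)

/-- `𝕎S(ρ) = W S(ρ)ᵀ + S(ρ) Wᵀ`. -/
noncomputable def WSmat {N : ℕ} (W : Matrix (Fin N) (Fin N) ℝ) (ρ : ℝ) :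
    Matrix (Fin N) (Fin N) ℝ :=
  W * (Smat W ρ)ᵀ + Smat W ρ * Wᵀ

/-- `𝕎(ρ) = Wᵀ S(ρ) + S(ρ)ᵀ W` (least squares version). -/
noncomputable def WLSmat {N : ℕ} (W : Matrix (Fin N) (Fin N) ℝ) (ρ : ℝ) :
    Matrix (Fin N) (Fin N) ℝ :=
  Wᵀ * Smat W ρ + (Smat W ρ)ᵀ * W

/-- The negative log-likelihood
`L(θ) = −log det S(ρ) + (1/2) log det Ω(ρ,σ²) + (1/2)(S(ρ)Ys − Xβ)ᵀ Ω(ρ,σ²)⁻¹ (S(ρ)Ys − Xβ)`. -/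
noncomputable def nll {N p1 p2 : ℕ} (W : Matrix (Fin N) (Fin N) ℝ) (lam2 : ℝ)
    (X : Matrix (Fin N) (Fin p1 ⊕ Fin p2) ℝ) (Ys : Fin N → ℝ)
    (ρ : ℝ) (β : Fin p1 ⊕ Fin p2 → ℝ) (σ2 : ℝ) : ℝ :=
  - Real.log (Smat W ρ).det + (1 / 2) * Real.log (Omat W lam2 ρ σ2).det
    + (1 / 2) * ((Smat W ρ *ᵥ Ys - X *ᵥ β) ⬝ᵥ
        ((Omat W lam2 ρ σ2)⁻¹ *ᵥ (Smat W ρ *ᵥ Ys - X *ᵥ β)))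

/-- Diagonal matrix `d(ρ)` with `d(ρ)_{ii} = 1/(S(ρ)ᵀ S(ρ))_{ii}`. -/
noncomputable def dmat {N : ℕ} (W : Matrix (Fin N) (Fin N) ℝ) (ρ : ℝ) :
    Matrix (Fin N) (Fin N) ℝ :=
  Matrix.diagonal fun i => ((((Smat W ρ)ᵀ * Smat W ρ) i i)⁻¹)

/-- Entrywise first derivative `ḋ(ρ)` of `d(ρ)` in `ρ`. -/
noncomputable def dmatDot {N : ℕ} (W : Matrix (Fin N) (Fin N) ℝ) (ρ : ℝ) :
    Matrix (Fin N) (Fin N) ℝ :=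
  Matrix.diagonal fun i => deriv (fun r => ((((Smat W r)ᵀ * Smat W r) i i)⁻¹)) ρ

/-- Entrywise second derivative `d̈(ρ)` of `d(ρ)` in `ρ`. -/
noncomputable def dmatDDot {N : ℕ} (W : Matrix (Fin N) (Fin N) ℝ) (ρ : ℝ) :
    Matrix (Fin N) (Fin N) ℝ :=
  Matrix.diagonal fun i => deriv (deriv (fun r => ((((Smat W r)ᵀ * Smat W r) i i)⁻¹))) ρ

/-- Least squares objective `L_LS(γ) = ‖d(ρ) S(ρ)ᵀ (S(ρ)Y − Xβ)‖²`. -/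
noncomputable def lsObj {N p1 p2 : ℕ} (W : Matrix (Fin N) (Fin N) ℝ)
    (X : Matrix (Fin N) (Fin p1 ⊕ Fin p2) ℝ) (Y : Fin N → ℝ)
    (ρ : ℝ) (β : Fin p1 ⊕ Fin p2 → ℝ) : ℝ :=
  ((dmat W ρ * (Smat W ρ)ᵀ) *ᵥ (Smat W ρ *ᵥ Y - X *ᵥ β)) ⬝ᵥ
    ((dmat W ρ * (Smat W ρ)ᵀ) *ᵥ (Smat W ρ *ᵥ Y - X *ᵥ β))

/-- Observed response `Y* = S0⁻¹(Xβ0 + E) + ε`. -/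
noncomputable def Yobs {N p1 p2 : ℕ} (W : Matrix (Fin N) (Fin N) ℝ) (ρ0 : ℝ)
    (X : Matrix (Fin N) (Fin p1 ⊕ Fin p2) ℝ) (β0 : Fin p1 ⊕ Fin p2 → ℝ)
    (E ε : Fin N → ℝ) : Fin N → ℝ :=
  (Smat W ρ0)⁻¹ *ᵥ (X *ᵥ β0 + E) + ε

/-- True response `Y = S0⁻¹(Xβ0 + E)`. -/
noncomputable def Ytrue {N p1 p2 : ℕ} (W : Matrix (Fin N) (Fin N) ℝ) (ρ0 : ℝ)
    (X : Matrix (Fin N) (Fin p1 ⊕ Fin p2) ℝ) (β0 : Fin p1 ⊕ Fin p2 → ℝ)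
    (E : Fin N → ℝ) : Fin N → ℝ :=
  (Smat W ρ0)⁻¹ *ᵥ (X *ᵥ β0 + E)

/-- Observed covariates `X* = (X1, X2 + Ex)`. -/
noncomputable def Xobs {N p1 p2 : ℕ} (X : Matrix (Fin N) (Fin p1 ⊕ Fin p2) ℝ)
    (Ex : Fin N → Fin p2 → ℝ) : Matrix (Fin N) (Fin p1 ⊕ Fin p2) ℝ :=
  X + Matrix.of fun i j => Sum.elim (fun _ => (0 : ℝ)) (fun k => Ex i k) j

/-- All the noise entries of `E`, `ε`, `Ex` gathered as a single family. -/
def noiseFam {Ωs : Type*} {N p2 : ℕ} (E ε : Ωs → Fin N → ℝ)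
    (Ex : Ωs → Fin N → Fin p2 → ℝ) :
    (Fin N ⊕ Fin N ⊕ Fin N × Fin p2) → Ωs → ℝ :=
  fun z ω => Sum.elim (fun i => E ω i) (Sum.elim (fun i => ε ω i) (fun q => Ex ω q.1 q.2)) z


/-! At `ρ₀` the residual `S₀Y* − X*β₀ = E + S₀ε − Ex β₀₂` and the spatial lag `WY*` are affine
functions of the stacked noise `ξ = (E, ε, Ex)`, with loading matrices `R` (`residualLoading`)
and `Q` (`responseLoading`). Writing `A(ρ) = d(ρ) S(ρ)ᵀ` (`lsWeight`), the derivative of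
`‖A r‖²` is `2 (A r)·(A' r − A WY*)`, a bilinear form in these affine functions of `ξ`. The
coordinates of `ξ` are centred and pairwise uncorrelated, so its expectation is
`2 tr((AᵀA'R − AᵀAQ) Λ Rᵀ)` with `Λ = diag Var ξ`, and `R Λ Rᵀ`, `Q Λ Rᵀ` are explicit. The `σ₀²`
contributions cancel because `ḋ_ii = 2 (SᵀW)_ii d_ii²`, which gives `tr(SᵀS d ḋ) = 2 tr(SᵀW d²)`;
cyclicity of the trace does the rest. -/

section Calculus

variable {m n : Type*}

lemma hasDerivAt_mulVec_apply [Fintype n] {A : ℝ → Matrix m n ℝ} {A' : Matrix m n ℝ} {r : ℝ → n → ℝ}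
    {r' : n → ℝ} {t : ℝ} (hA : ∀ i j, HasDerivAt (fun s => A s i j) (A' i j) t)
    (hr : ∀ j, HasDerivAt (fun s => r s j) (r' j) t) (i : m) :
    HasDerivAt (fun s => (A s *ᵥ r s) i) ((A' *ᵥ r t + A t *ᵥ r') i) t := by
  refine (HasDerivAt.fun_sum (u := Finset.univ) fun j _ => (hA i j).fun_mul (hr j)).congr_deriv ?_
  simp [mulVec, dotProduct, Finset.sum_add_distrib]

lemma hasDerivAt_dotProduct_self [Fintype m] {u : ℝ → m → ℝ} {u' : m → ℝ} {t : ℝ}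
    (hu : ∀ i, HasDerivAt (fun s => u s i) (u' i) t) :
    HasDerivAt (fun s => u s ⬝ᵥ u s) (2 * (u t ⬝ᵥ u')) t := by
  refine (HasDerivAt.fun_sum (u := Finset.univ) fun i _ => (hu i).fun_mul (hu i)).congr_deriv ?_
  simp only [dotProduct, Finset.mul_sum]
  exact Finset.sum_congr rfl fun i _ => by ring

end Calculus

section MatrixAlgebra

variable {m n ι R : Type*} [Fintype n] [Fintype ι] [CommRing R]

lemma mulVec_dotProduct_sub_mulVec [Fintype m] (A A' : Matrix m n R) (P Q : Matrix n ι R)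
    (c : n → R) (x : ι → R) :
    (A *ᵥ (P *ᵥ x)) ⬝ᵥ (A' *ᵥ (P *ᵥ x) - A *ᵥ (c + Q *ᵥ x))
      = (P *ᵥ x) ⬝ᵥ (-((Aᵀ * A) *ᵥ c) + (Aᵀ * A' * P - Aᵀ * A * Q) *ᵥ x) := by
  rw [dotProduct_comm, dotProduct_mulVec, ← mulVec_transpose, dotProduct_comm]
  simp only [mulVec_sub, mulVec_add, sub_mulVec, mulVec_mulVec, Matrix.mul_assoc]
  congr 1
  abel

lemma sub_mul_mul_eq {p : Type*} [Fintype p] (P P' : Matrix m n R) (A B : Matrix n p R)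
    (C : Matrix p p R) (D : Matrix p n R) :
    (P * A - P' * B) * C * D = P * (A * C * D) - P' * (B * C * D) := by
  simp only [Matrix.sub_mul, Matrix.mul_assoc]

end MatrixAlgebra

section Moments

variable {Ω ι : Type*} [MeasurableSpace Ω] {μ : Measure Ω} {Z : ι → Ω → ℝ}

lemma integral_mul_eq_zero_of_iIndepFun (hindep : iIndepFun Z μ)
    (hZ : ∀ z, AEStronglyMeasurable (Z z) μ)
    (hmean : ∀ z, ∫ ω, Z z ω ∂μ = 0) :
    Pairwise fun z w => ∫ ω, Z z ω * Z w ω ∂μ = 0 := by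
  intro z w hzw
  show ∫ ω, Z z ω * Z w ω ∂μ = 0
  rw [(hindep.indepFun hzw).integral_fun_mul_eq_mul_integral (hZ z) (hZ w), hmean z, zero_mul]

lemma memLp_dotProduct [Fintype ι] (hZ : ∀ z, MemLp (Z z) 2 μ) (a : ι → ℝ) :
    MemLp (fun ω => a ⬝ᵥ fun z => Z z ω) 2 μ :=
  memLp_finsetSum _ fun z _ => (hZ z).const_mul (a z)

lemma integral_dotProduct_mul_dotProduct [IsFiniteMeasure μ] [Fintype ι] (hZ : ∀ z, MemLp (Z z) 2 μ)
    (hmean : ∀ z, ∫ ω, Z z ω ∂μ = 0)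
    (huncorr : Pairwise fun z w => ∫ ω, Z z ω * Z w ω ∂μ = 0) (a b : ι → ℝ) (c : ℝ) :
    ∫ ω, (a ⬝ᵥ fun z => Z z ω) * (c + b ⬝ᵥ fun z => Z z ω) ∂μ
      = ∑ z, a z * b z * ∫ ω, Z z ω ^ 2 ∂μ := by
  have hint (z w : ι) : Integrable (fun ω => Z z ω * Z w ω) μ := (hZ z).integrable_mul (hZ w)
  have hexpand (ω : Ω) : (a ⬝ᵥ fun z => Z z ω) * (c + b ⬝ᵥ fun z => Z z ω)
      = ∑ z, (c * a z * Z z ω + ∑ w, a z * b w * (Z z ω * Z w ω)) := by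
    simp only [dotProduct, Finset.sum_mul]
    refine Finset.sum_congr rfl fun z _ => ?_
    rw [mul_add, Finset.mul_sum]
    exact congrArg₂ (· + ·) (by ring) (Finset.sum_congr rfl fun w _ => by ring)
  have hlin (z : ι) : Integrable (fun ω => c * a z * Z z ω) μ :=
    ((hZ z).integrable one_le_two).const_mul _
  have hquad (z : ι) : Integrable (fun ω => ∑ w, a z * b w * (Z z ω * Z w ω)) μ :=
    integrable_finsetSum _ fun w _ => (hint z w).const_mul _
  have hterm (z : ι) : Integrable
      (fun ω => c * a z * Z z ω + ∑ w, a z * b w * (Z z ω * Z w ω)) μ := (hlin z).add (hquad z)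
  simp_rw [hexpand]
  rw [integral_finsetSum _ fun z _ => hterm z]
  refine Finset.sum_congr rfl fun z _ => ?_
  rw [integral_add (hlin z) (hquad z), integral_const_mul, hmean, mul_zero, zero_add,
    integral_finsetSum _ fun w _ => (hint z w).const_mul _,
    Finset.sum_eq_single z (fun w _ hwz => by rw [integral_const_mul, huncorr hwz.symm, mul_zero])
      (fun h => absurd (Finset.mem_univ z) h),
    integral_const_mul]
  simp only [sq]

lemma integral_mulVec_dotProduct [IsFiniteMeasure μ] [Fintype ι] [DecidableEq ι] {n : Type*}
    [Fintype n] (hZ : ∀ z, MemLp (Z z) 2 μ)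
    (hmean : ∀ z, ∫ ω, Z z ω ∂μ = 0)
    (huncorr : Pairwise fun z w => ∫ ω, Z z ω * Z w ω ∂μ = 0)
    (R Q : Matrix n ι ℝ) (c : n → ℝ) :
    ∫ ω, (R *ᵥ fun z => Z z ω) ⬝ᵥ (c + Q *ᵥ fun z => Z z ω) ∂μ
      = trace (Q * diagonal (fun z => ∫ ω, Z z ω ^ 2 ∂μ) * Rᵀ) := by
  have hint (j : n) : Integrable
      (fun ω => (R *ᵥ fun z => Z z ω) j * (c j + (Q *ᵥ fun z => Z z ω) j)) μ :=
    (memLp_dotProduct hZ (R j)).integrable_mul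
      ((memLp_const (c j)).add (memLp_dotProduct hZ (Q j)))
  calc ∫ ω, (R *ᵥ fun z => Z z ω) ⬝ᵥ (c + Q *ᵥ fun z => Z z ω) ∂μ
      = ∑ j, ∑ z, R j z * Q j z * ∫ ω, Z z ω ^ 2 ∂μ := by
        simp only [dotProduct, Pi.add_apply]
        rw [integral_finsetSum _ fun j _ => hint j]
        exact Finset.sum_congr rfl fun j _ =>
          integral_dotProduct_mul_dotProduct hZ hmean huncorr (R j) (Q j) (c j)
    _ = trace (Q * diagonal (fun z => ∫ ω, Z z ω ^ 2 ∂μ) * Rᵀ) := by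
        simp only [trace, diag, mul_apply, diagonal_apply, transpose_apply, mul_ite, mul_zero,
          Finset.sum_ite_eq', Finset.mem_univ, if_true]
        exact Finset.sum_congr rfl fun j _ => Finset.sum_congr rfl fun z _ => by ring

end Moments

section SpatialWeights

variable {N : ℕ} (W : Matrix (Fin N) (Fin N) ℝ)

lemma hasDerivAt_Smat_apply (ρ : ℝ) (i j : Fin N) :
    HasDerivAt (fun r => Smat W r i j) (-W i j) ρ := by
  simpa [Smat] using ((hasDerivAt_id ρ).mul_const (W i j)).const_sub ((1 : Matrix _ _ ℝ) i j)

lemma hasDerivAt_gram_Smat_apply_self (ρ : ℝ) (i : Fin N) :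
    HasDerivAt (fun r => ((Smat W r)ᵀ * Smat W r) i i) (-2 * ((Smat W ρ)ᵀ * W) i i) ρ := by
  refine (HasDerivAt.fun_sum (u := Finset.univ) fun k _ =>
    (hasDerivAt_Smat_apply W ρ k i).fun_mul (hasDerivAt_Smat_apply W ρ k i)).congr_deriv ?_
  simp only [mul_apply, transpose_apply, Finset.mul_sum]
  exact Finset.sum_congr rfl fun k _ => by ring

noncomputable def lsWeight (ρ : ℝ) : Matrix (Fin N) (Fin N) ℝ :=
  dmat W ρ * (Smat W ρ)ᵀ

noncomputable def lsWeightDeriv (ρ : ℝ) : Matrix (Fin N) (Fin N) ℝ :=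
  dmatDot W ρ * (Smat W ρ)ᵀ - dmat W ρ * Wᵀ

variable {W}

lemma one_le_gram_Smat_apply_self (hW : ∀ i, W i i = 0) (ρ : ℝ) (i : Fin N) :
    1 ≤ ((Smat W ρ)ᵀ * Smat W ρ) i i := by
  have hdiag : Smat W ρ i i = 1 := by simp [Smat, hW]
  calc (1 : ℝ) = Smat W ρ i i * Smat W ρ i i := by rw [hdiag, one_mul]
    _ ≤ ∑ k, Smat W ρ k i * Smat W ρ k i :=
      Finset.single_le_sum (f := fun k => Smat W ρ k i * Smat W ρ k i)
        (fun k _ => mul_self_nonneg _) (Finset.mem_univ i)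
    _ = ((Smat W ρ)ᵀ * Smat W ρ) i i := by simp [mul_apply]

lemma hasDerivAt_inv_gram_Smat_apply_self (hW : ∀ i, W i i = 0) (ρ : ℝ) (i : Fin N) :
    HasDerivAt (fun r => (((Smat W r)ᵀ * Smat W r) i i)⁻¹)
      (2 * ((Smat W ρ)ᵀ * W) i i * (((Smat W ρ)ᵀ * Smat W ρ) i i)⁻¹ ^ 2) ρ := by
  have hpos := one_le_gram_Smat_apply_self hW ρ i
  refine ((hasDerivAt_gram_Smat_apply_self W ρ i).inv (by positivity)).congr_deriv ?_
  field_simp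

lemma dmatDot_eq (hW : ∀ i, W i i = 0) (ρ : ℝ) :
    dmatDot W ρ = diagonal fun i =>
      2 * ((Smat W ρ)ᵀ * W) i i * (((Smat W ρ)ᵀ * Smat W ρ) i i)⁻¹ ^ 2 :=
  congrArg diagonal (funext fun i => (hasDerivAt_inv_gram_Smat_apply_self hW ρ i).deriv)

lemma hasDerivAt_lsWeight_apply (hW : ∀ i, W i i = 0) (ρ : ℝ) (i j : Fin N) :
    HasDerivAt (fun r => lsWeight W r i j) (lsWeightDeriv W ρ i j) ρ := by
  have hd := (hasDerivAt_inv_gram_Smat_apply_self hW ρ i).differentiableAt.hasDerivAt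
  have hentry : (fun r => lsWeight W r i j)
      = fun r => (((Smat W r)ᵀ * Smat W r) i i)⁻¹ * Smat W r j i := by
    ext r; simp [lsWeight, dmat, diagonal_mul]
  rw [hentry]
  refine (hd.fun_mul (hasDerivAt_Smat_apply W ρ j i)).congr_deriv ?_
  simp [lsWeightDeriv, dmat, dmatDot, diagonal_mul]
  ring

lemma hasDerivAt_lsObj {p1 p2 : ℕ} (hW : ∀ i, W i i = 0) (X : Matrix (Fin N) (Fin p1 ⊕ Fin p2) ℝ)
    (Y : Fin N → ℝ) (β : Fin p1 ⊕ Fin p2 → ℝ) (ρ : ℝ) :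
    HasDerivAt (fun r => lsObj W X Y r β)
      (2 * (lsWeight W ρ *ᵥ (Smat W ρ *ᵥ Y - X *ᵥ β) ⬝ᵥ
        (lsWeightDeriv W ρ *ᵥ (Smat W ρ *ᵥ Y - X *ᵥ β) - lsWeight W ρ *ᵥ (W *ᵥ Y)))) ρ := by
  have hres (j : Fin N) : HasDerivAt (fun r => (Smat W r *ᵥ Y - X *ᵥ β) j) (-(W *ᵥ Y) j) ρ := by
    have := hasDerivAt_mulVec_apply (r := fun _ => Y) (hasDerivAt_Smat_apply W ρ)
      (fun k => hasDerivAt_const ρ (Y k)) j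
    rw [show (fun i j => -W i j) = -W from rfl] at this
    simpa [neg_mulVec, ← Pi.zero_def] using this.sub_const ((X *ᵥ β) j)
  refine (hasDerivAt_dotProduct_self
    (hasDerivAt_mulVec_apply (hasDerivAt_lsWeight_apply hW ρ) hres)).congr_deriv ?_
  rw [show (fun j => -(W *ᵥ Y) j) = -(W *ᵥ Y) from rfl, mulVec_neg, ← sub_eq_add_neg]

lemma trace_gram_mul_dmat_mul_dmatDot (hW : ∀ i, W i i = 0) (ρ : ℝ) :
    trace ((Smat W ρ)ᵀ * Smat W ρ * dmat W ρ * dmatDot W ρ)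
      = 2 * trace ((Smat W ρ)ᵀ * W * dmat W ρ * dmat W ρ) := by
  simp only [dmatDot_eq hW, dmat, trace, diag, mul_diagonal, Finset.mul_sum]
  refine Finset.sum_congr rfl fun i _ => ?_
  have hpos := one_le_gram_Smat_apply_self hW ρ i
  field_simp

lemma two_mul_trace_sub_trace_eq_bias (hW : ∀ i, W i i = 0) {ρ : ℝ} (hS : IsUnit (Smat W ρ).det)
    (s l lx b : ℝ) :
    2 * (trace ((lsWeight W ρ)ᵀ * lsWeightDeriv W ρ
            * ((s + lx * b) • 1 + l • (Smat W ρ * (Smat W ρ)ᵀ)))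
        - trace ((lsWeight W ρ)ᵀ * lsWeight W ρ * (s • (W * (Smat W ρ)⁻¹) + l • (W * (Smat W ρ)ᵀ))))
      = 2 * l *
          (trace (((Smat W ρ)ᵀ * Smat W ρ) * ((Smat W ρ)ᵀ * Smat W ρ) * dmat W ρ * dmatDot W ρ)
            - trace ((Smat W ρ)ᵀ * Smat W ρ * (dmat W ρ * dmat W ρ) * WLSmat W ρ))
        + 2 * lx * b *
          (trace ((Smat W ρ)ᵀ * Smat W ρ * dmat W ρ * dmatDot W ρ)
            - trace (Smat W ρ * (dmat W ρ * dmat W ρ) * Wᵀ)) := by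
  have hcancel := trace_gram_mul_dmat_mul_dmatDot hW ρ
  have hDt : (dmat W ρ)ᵀ = dmat W ρ := diagonal_transpose _
  rw [lsWeight, lsWeightDeriv, WLSmat]
  set S := Smat W ρ
  set D := dmat W ρ
  set Dd := dmatDot W ρ
  -- instances of `tr (XY) = tr (YX)` and `tr Xᵀ = tr X` bringing all traces to a common form
  have r1 := trace_mul_comm (S * D * Dd) Sᵀ
  have r2 := trace_transpose (S * D * D * Wᵀ)
  have r3 := trace_mul_comm (W * D * D) Sᵀ
  have r4 := trace_mul_comm (S * D * D * Sᵀ * W) S⁻¹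
  have r5 := trace_mul_comm (D * D) (Sᵀ * W)
  have r6 := trace_mul_comm (S * D * Dd * Sᵀ * S) Sᵀ
  have r7 := trace_mul_comm (Sᵀ * S * D * Dd) (Sᵀ * S)
  have r8 := trace_mul_comm (S * D * D * Wᵀ * S) Sᵀ
  have r9 := trace_mul_comm (S * D * D * Sᵀ * W) Sᵀ
  simp only [transpose_mul, transpose_transpose, hDt, Matrix.mul_assoc,
    nonsing_inv_mul_cancel_left _ _ hS] at r1 r2 r3 r4 r5 r6 r7 r8 r9 hcancel
  simp only [transpose_mul, transpose_transpose, hDt, Matrix.mul_sub, Matrix.sub_mul,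
    Matrix.mul_add, Matrix.mul_smul, Matrix.mul_one,
    trace_add, trace_sub, trace_smul, smul_eq_mul, Matrix.mul_assoc]
  rw [r1, r6, r7, r8, r9, r4, r5, ← r2, r3]
  -- the `s`-terms (the `σ₀²` contributions) cancel by `hcancel`
  linear_combination (2 * s) * hcancel

end SpatialWeights

section NoiseLoadings

variable {N p1 p2 : ℕ}

def blockDiagRow (b : Fin p2 → ℝ) : Matrix (Fin N) (Fin N × Fin p2) ℝ :=
  of fun j q => if j = q.1 then b q.2 else 0

lemma blockDiagRow_mulVec (b : Fin p2 → ℝ) (M : Matrix (Fin N) (Fin p2) ℝ) :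
    blockDiagRow b *ᵥ (fun q => M q.1 q.2) = M *ᵥ b := by
  ext j
  simp [blockDiagRow, mulVec, dotProduct, Fintype.sum_prod_type, mul_comm]

lemma blockDiagRow_mul_transpose (b : Fin p2 → ℝ) :
    blockDiagRow (N := N) b * (blockDiagRow (N := N) b)ᵀ
      = (b ⬝ᵥ b) • (1 : Matrix (Fin N) (Fin N) ℝ) := by
  ext j k
  rw [mul_apply, Fintype.sum_prod_type]
  by_cases hjk : j = k <;> simp [blockDiagRow, one_apply, hjk, dotProduct]

lemma Xobs_mulVec (X : Matrix (Fin N) (Fin p1 ⊕ Fin p2) ℝ) (M : Matrix (Fin N) (Fin p2) ℝ)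
    (β : Fin p1 ⊕ Fin p2 → ℝ) :
    Xobs X M *ᵥ β = X *ᵥ β + M *ᵥ (β ∘ Sum.inr) := by
  rw [show Xobs X M = X + fromCols 0 M from rfl, add_mulVec, fromCols_mulVec, zero_mulVec,
    zero_add]

variable (W : Matrix (Fin N) (Fin N) ℝ) (ρ0 : ℝ)

def noiseVar (N p2 : ℕ) (s l lx : ℝ) : Fin N ⊕ Fin N ⊕ Fin N × Fin p2 → ℝ :=
  Sum.elim (fun _ => s) (Sum.elim (fun _ => l) fun _ => lx)

noncomputable def residualLoading (b : Fin p2 → ℝ) :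
    Matrix (Fin N) (Fin N ⊕ Fin N ⊕ Fin N × Fin p2) ℝ :=
  fromCols 1 (fromCols (Smat W ρ0) (-blockDiagRow b))

noncomputable def responseLoading : Matrix (Fin N) (Fin N ⊕ Fin N ⊕ Fin N × Fin p2) ℝ :=
  fromCols (W * (Smat W ρ0)⁻¹) (fromCols W 0)

variable {W ρ0}

lemma residual_eq_residualLoading_mulVec (hS : IsUnit (Smat W ρ0).det)
    (X : Matrix (Fin N) (Fin p1 ⊕ Fin p2) ℝ) (β0 : Fin p1 ⊕ Fin p2 → ℝ) (e u : Fin N → ℝ)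
    (M : Matrix (Fin N) (Fin p2) ℝ) :
    Smat W ρ0 *ᵥ Yobs W ρ0 X β0 e u - Xobs X M *ᵥ β0
      = residualLoading W ρ0 (β0 ∘ Sum.inr) *ᵥ Sum.elim e (Sum.elim u fun q => M q.1 q.2) := by
  rw [Yobs, mulVec_add, mulVec_mulVec, mul_nonsing_inv _ hS, one_mulVec, Xobs_mulVec,
    residualLoading, fromCols_mulVec_sumElim, fromCols_mulVec_sumElim, one_mulVec, neg_mulVec,
    blockDiagRow_mulVec]
  abel

lemma mulVec_Yobs_eq_responseLoading_mulVec (X : Matrix (Fin N) (Fin p1 ⊕ Fin p2) ℝ)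
    (β0 : Fin p1 ⊕ Fin p2 → ℝ) (e u : Fin N → ℝ) (x : Fin N × Fin p2 → ℝ) :
    W *ᵥ Yobs W ρ0 X β0 e u
      = (W * (Smat W ρ0)⁻¹ * X) *ᵥ β0 + responseLoading W ρ0 *ᵥ Sum.elim e (Sum.elim u x) := by
  rw [Yobs, responseLoading, fromCols_mulVec_sumElim, fromCols_mulVec_sumElim, zero_mulVec,
    add_zero]
  simp only [mulVec_add, mulVec_mulVec, Matrix.mul_assoc]
  abel

variable (W ρ0)

lemma residualLoading_mul_diagonal_mul_transpose (b : Fin p2 → ℝ) (s l lx : ℝ) :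
    residualLoading W ρ0 b * diagonal (noiseVar N p2 s l lx) * (residualLoading W ρ0 b)ᵀ
      = (s + lx * (b ⬝ᵥ b)) • 1 + l • (Smat W ρ0 * (Smat W ρ0)ᵀ) := by
  simp only [residualLoading, noiseVar, ← fromBlocks_diagonal, ← smul_one_eq_diagonal,
    fromCols_mul_fromBlocks, transpose_fromCols, fromCols_mul_fromRows, transpose_one,
    transpose_neg, Matrix.mul_zero, Matrix.mul_one, Matrix.mul_smul, Matrix.smul_mul,
    Matrix.neg_mul, Matrix.mul_neg, add_zero, zero_add, blockDiagRow_mul_transpose]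
  module

lemma responseLoading_mul_diagonal_mul_transpose (b : Fin p2 → ℝ) (s l lx : ℝ) :
    responseLoading (p2 := p2) W ρ0 * diagonal (noiseVar N p2 s l lx) * (residualLoading W ρ0 b)ᵀ
      = s • (W * (Smat W ρ0)⁻¹) + l • (W * (Smat W ρ0)ᵀ) := by
  simp only [responseLoading, residualLoading, noiseVar, ← fromBlocks_diagonal,
    ← smul_one_eq_diagonal, fromCols_mul_fromBlocks, transpose_fromCols, fromCols_mul_fromRows,
    transpose_one, Matrix.mul_zero, Matrix.mul_one, Matrix.mul_smul, Matrix.smul_mul, smul_zero,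
    Matrix.zero_mul, add_zero, zero_add]

variable {W ρ0}

lemma deriv_lsObj_Xobs_Yobs {Ω : Type*} (hW : ∀ i, W i i = 0) (hS : IsUnit (Smat W ρ0).det)
    (X : Matrix (Fin N) (Fin p1 ⊕ Fin p2) ℝ) (β0 : Fin p1 ⊕ Fin p2 → ℝ) (E ε : Ω → Fin N → ℝ)
    (Ex : Ω → Fin N → Fin p2 → ℝ) (ω : Ω) :
    deriv (fun ρ => lsObj W (Xobs X (Ex ω)) (Yobs W ρ0 X β0 (E ω) (ε ω)) ρ β0) ρ0
      = 2 * ((residualLoading W ρ0 (β0 ∘ Sum.inr) *ᵥ fun z => noiseFam E ε Ex z ω)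
        ⬝ᵥ (-(((lsWeight W ρ0)ᵀ * lsWeight W ρ0) *ᵥ ((W * (Smat W ρ0)⁻¹ * X) *ᵥ β0))
          + ((lsWeight W ρ0)ᵀ * lsWeightDeriv W ρ0 * residualLoading W ρ0 (β0 ∘ Sum.inr)
              - (lsWeight W ρ0)ᵀ * lsWeight W ρ0 * responseLoading W ρ0)
            *ᵥ fun z => noiseFam E ε Ex z ω)) := by
  rw [(hasDerivAt_lsObj hW _ _ β0 ρ0).deriv,
    residual_eq_residualLoading_mulVec hS X β0 (E ω) (ε ω) (Ex ω),
    mulVec_Yobs_eq_responseLoading_mulVec X β0 (E ω) (ε ω) fun q => Ex ω q.1 q.2,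
    mulVec_dotProduct_sub_mulVec]
  rfl

lemma two_mul_trace_loadings_eq_bias (hW : ∀ i, W i i = 0) (hS : IsUnit (Smat W ρ0).det)
    (b : Fin p2 → ℝ) (s l lx : ℝ) :
    2 * trace (((lsWeight W ρ0)ᵀ * lsWeightDeriv W ρ0 * residualLoading W ρ0 b
          - (lsWeight W ρ0)ᵀ * lsWeight W ρ0 * responseLoading W ρ0)
        * diagonal (noiseVar N p2 s l lx) * (residualLoading W ρ0 b)ᵀ)
      = 2 * l *
          (trace (((Smat W ρ0)ᵀ * Smat W ρ0) * ((Smat W ρ0)ᵀ * Smat W ρ0) * dmat W ρ0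
              * dmatDot W ρ0)
            - trace ((Smat W ρ0)ᵀ * Smat W ρ0 * (dmat W ρ0 * dmat W ρ0) * WLSmat W ρ0))
        + 2 * lx * (b ⬝ᵥ b) *
          (trace ((Smat W ρ0)ᵀ * Smat W ρ0 * dmat W ρ0 * dmatDot W ρ0)
            - trace (Smat W ρ0 * (dmat W ρ0 * dmat W ρ0) * Wᵀ)) := by
  rw [sub_mul_mul_eq, residualLoading_mul_diagonal_mul_transpose,
    responseLoading_mul_diagonal_mul_transpose, trace_sub]
  exact two_mul_trace_sub_trace_eq_bias hW hS s l lx (b ⬝ᵥ b)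

end NoiseLoadings

theorem statement_12_general
    {Ωs : Type*} [MeasurableSpace Ωs] (μ : Measure Ωs) [IsProbabilityMeasure μ]
    (N p1 p2 : ℕ)
    (W : Matrix (Fin N) (Fin N) ℝ) (hW : ∀ i, W i i = 0)
    (X : Matrix (Fin N) (Fin p1 ⊕ Fin p2) ℝ)
    (ρ0 : ℝ) (β0 : Fin p1 ⊕ Fin p2 → ℝ) (σ02 lam2 lamx2 : ℝ)
    (hS0 : 0 < (Smat W ρ0).det)
    (E ε : Ωs → Fin N → ℝ) (Ex : Ωs → Fin N → Fin p2 → ℝ)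
    (hindep : iIndepFun (noiseFam E ε Ex) μ)
    (hmom : ∀ z, MemLp (noiseFam E ε Ex z) 4 μ)
    (hmean : ∀ z, ∫ ω, noiseFam E ε Ex z ω ∂μ = 0)
    (hEvar : ∀ i, ∫ ω, (E ω i) ^ 2 ∂μ = σ02)
    (hepsvar : ∀ i, ∫ ω, (ε ω i) ^ 2 ∂μ = lam2)
    (hExvar : ∀ i j, ∫ ω, (Ex ω i j) ^ 2 ∂μ = lamx2) :
    ∫ ω, deriv (fun ρ =>
        lsObj W (Xobs X (Ex ω)) (Yobs W ρ0 X β0 (E ω) (ε ω)) ρ β0) ρ0 ∂μ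
      = 2 * lam2 *
          (Matrix.trace (((Smat W ρ0)ᵀ * Smat W ρ0) * ((Smat W ρ0)ᵀ * Smat W ρ0) *
              dmat W ρ0 * dmatDot W ρ0)
            - Matrix.trace ((Smat W ρ0)ᵀ * Smat W ρ0 * (dmat W ρ0 * dmat W ρ0) * WLSmat W ρ0))
        + 2 * lamx2 * (∑ k, β0 (Sum.inr k) ^ 2) *
            (Matrix.trace ((Smat W ρ0)ᵀ * Smat W ρ0 * dmat W ρ0 * dmatDot W ρ0)
              - Matrix.trace (Smat W ρ0 * (dmat W ρ0 * dmat W ρ0) * Wᵀ))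
  := by
  have hS : IsUnit (Smat W ρ0).det := hS0.ne'.isUnit
  have hL2 (z) : MemLp (noiseFam E ε Ex z) 2 μ := (hmom z).mono_exponent (by norm_num)
  have hvar : (fun z => ∫ ω, noiseFam E ε Ex z ω ^ 2 ∂μ) = noiseVar N p2 σ02 lam2 lamx2 := by
    ext (i | i | ⟨i, j⟩)
    exacts [hEvar i, hepsvar i, hExvar i j]
  have huncorr :=
    integral_mul_eq_zero_of_iIndepFun hindep (fun z => (hL2 z).aestronglyMeasurable) hmean
  simp_rw [deriv_lsObj_Xobs_Yobs hW hS X β0 E ε Ex]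
  rw [integral_const_mul, integral_mulVec_dotProduct hL2 hmean huncorr, hvar,
    two_mul_trace_loadings_eq_bias hW hS]
  simp only [dotProduct, Function.comp_apply, sq]

theorem statement_12
    {Ωs : Type*} [MeasurableSpace Ωs] (μ : Measure Ωs) [IsProbabilityMeasure μ]
    (N p1 p2 : ℕ) (hN : 0 < N) (hp1 : 0 < p1) (hp2 : 0 < p2)
    (W : Matrix (Fin N) (Fin N) ℝ) (hW : ∀ i, W i i = 0)
    (X : Matrix (Fin N) (Fin p1 ⊕ Fin p2) ℝ)
    (ρ0 : ℝ) (β0 : Fin p1 ⊕ Fin p2 → ℝ) (σ02 lam2 lamx2 : ℝ)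
    (hσ : 0 < σ02) (hlam : 0 < lam2) (hlamx : 0 < lamx2)
    (hS0 : 0 < (Smat W ρ0).det)
    (E ε : Ωs → Fin N → ℝ) (Ex : Ωs → Fin N → Fin p2 → ℝ)
    (hindep : iIndepFun (noiseFam E ε Ex) μ)
    (hmom : ∀ z, MemLp (noiseFam E ε Ex z) 4 μ)
    (hmean : ∀ z, ∫ ω, noiseFam E ε Ex z ω ∂μ = 0)
    (hEvar : ∀ i, ∫ ω, (E ω i) ^ 2 ∂μ = σ02)
    (hepsvar : ∀ i, ∫ ω, (ε ω i) ^ 2 ∂μ = lam2)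
    (hExvar : ∀ i j, ∫ ω, (Ex ω i j) ^ 2 ∂μ = lamx2) :
    ∫ ω, deriv (fun ρ =>
        lsObj W (Xobs X (Ex ω)) (Yobs W ρ0 X β0 (E ω) (ε ω)) ρ β0) ρ0 ∂μ
      = 2 * lam2 *
          (Matrix.trace (((Smat W ρ0)ᵀ * Smat W ρ0) * ((Smat W ρ0)ᵀ * Smat W ρ0) *
              dmat W ρ0 * dmatDot W ρ0)
            - Matrix.trace ((Smat W ρ0)ᵀ * Smat W ρ0 * (dmat W ρ0 * dmat W ρ0) * WLSmat W ρ0))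
        + 2 * lamx2 * (∑ k, β0 (Sum.inr k) ^ 2) *
            (Matrix.trace ((Smat W ρ0)ᵀ * Smat W ρ0 * dmat W ρ0 * dmatDot W ρ0)
              - Matrix.trace (Smat W ρ0 * (dmat W ρ0 * dmat W ρ0) * Wᵀ)) :=
  statement_12_general μ N p1 p2 W hW X ρ0 β0 σ02 lam2 lamx2 hS0 E ε Ex hindep hmom hmean hEvar
    hepsvar hExvar

end PSAR
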